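/- arXiv:1611.08296 — 2 statements merged into one kernel-verified Lean document; each statement's English description precedes it below -/
import Mathlib

section
/- Let W act on a torus T of dimension r, let n | n' be positive integers prime to the characteristic, and form the semidirect products W⋉T_n and W⋉T_{n'}. Then the ℚ̄_ℓ-linear map h : ℚ̄_ℓ[W⋉T_n] → ℚ̄_ℓ[W⋉T_{n'}] defined by h(wt) = (n/n')^r Σ_{t' ∈ T_{n'}, t'^{n'/n} = t} wt' is an algebra homomorphism (compatible with multiplication). -/
/-- The subgroup of `m`-torsion points of a commutative group. -/
def torsionSubgroup (G : Type*) [CommGroup G] (m : ℕ) : Subgroup G where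
  carrier := {x | x ^ m = 1}
  one_mem' := by simp
  mul_mem' := by
    intro a b ha hb
    simp only [Set.mem_setOf_eq] at *
    rw [mul_pow, ha, hb, one_mul]
  inv_mem' := by
    intro a ha
    simp only [Set.mem_setOf_eq] at *
    rw [inv_pow, ha, inv_one]

/-- The norm-type map `T_{n'} → T_n`, `t ↦ t^{n'/n}`, for `n ∣ n'`. -/
def powHom {G : Type*} [CommGroup G] (n n' : ℕ) (h : n ∣ n') :
    torsionSubgroup G n' →* torsionSubgroup G n where
  toFun x := ⟨(x : G) ^ (n' / n), by
    have hx : (x : G) ^ n' = 1 := x.2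
    show ((x : G) ^ (n' / n)) ^ n = 1
    rw [← pow_mul, Nat.div_mul_cancel h, hx]⟩
  map_one' := by
    apply Subtype.ext
    simp
  map_mul' := by
    intro a b
    apply Subtype.ext
    simp [mul_pow]

/-- Automorphisms of `G` restrict to automorphisms of the `m`-torsion subgroup. -/
def MulAut.restrictTorsion {G : Type*} [CommGroup G] (m : ℕ) :
    MulAut G →* MulAut (torsionSubgroup G m) where
  toFun f :=
    { toFun := fun x => ⟨f (x : G), by
        show (f (x : G)) ^ m = 1
        rw [← map_pow]
        have hx : (x : G) ^ m = 1 := x.2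
        rw [hx, map_one]⟩
      invFun := fun x => ⟨f.symm (x : G), by
        show (f.symm (x : G)) ^ m = 1
        rw [← map_pow]
        have hx : (x : G) ^ m = 1 := x.2
        rw [hx, map_one]⟩
      left_inv := fun x => Subtype.ext (f.symm_apply_apply _)
      right_inv := fun x => Subtype.ext (f.apply_symm_apply _)
      map_mul' := fun x y => Subtype.ext (map_mul f _ _) }
  map_one' := by
    apply MulEquiv.ext
    intro x
    exact Subtype.ext rfl
  map_mul' := by
    intro f g
    apply MulEquiv.ext
    intro x
    exact Subtype.ext rfl

/-! Write `e_{(t,w)}` for the sum of all lifts `(t', w)` with `t'^{n'/n} = t`, so that `h` is the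
linear extension of `g ↦ (n/n')^r e_g`. Because `t' ↦ t'^{n'/n}` commutes with the action of
`W`, left multiplication by a single lift of `g` carries `e_{g'}` onto `e_{g g'}`; hence
`e_g e_{g'} = c · e_{g g'}` with `c` the size of a fibre of the power map `T_{n'} → T_n`.
Over an algebraically closed field this map is surjective, so every fibre has
`|T_{n'}| / |T_n| = (n'/n)^r` elements, which cancels one of the two factors `(n/n')^r`. -/

open Finset

section FiberSum

variable {R N N' W : Type*} [Semiring R] [Group N] [Group N'] [Group W]
  {φ : W →* MulAut N} {φ' : W →* MulAut N'} [Fintype N'] [DecidableEq N]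

noncomputable def fiberSum (π : N' →* N) (g : N ⋊[φ] W) : MonoidAlgebra R (N' ⋊[φ'] W) :=
  ∑ t' : N', if π t' = g.left then MonoidAlgebra.single ⟨t', g.right⟩ 1 else 0

variable {π : N' →* N}

theorem single_mul_fiberSum (hπ : ∀ w t, π (φ' w t) = φ w (π t)) {g : N ⋊[φ] W} {t' : N'}
    (ht' : π t' = g.left) (g' : N ⋊[φ] W) :
    (MonoidAlgebra.single ⟨t', g.right⟩ 1 * fiberSum π g' : MonoidAlgebra R (N' ⋊[φ'] W)) =
      fiberSum π (g * g') := by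
  have hmem (s' : N') : π (t' * φ' g.right s') = (g * g').left ↔ π s' = g'.left := by
    rw [map_mul, ht', hπ, SemidirectProduct.mul_left, mul_right_inj,
      (φ g.right).injective.eq_iff]
  unfold fiberSum
  rw [Finset.mul_sum]
  refine Fintype.sum_equiv ((φ' g.right).toEquiv.trans (Equiv.mulLeft t')) _ _ fun s' => ?_
  simp only [mul_ite, mul_zero, MonoidAlgebra.single_mul_single, mul_one]
  exact (if_congr (hmem s').symm rfl rfl)

theorem fiberSum_mul_fiberSum (hπ : ∀ w t, π (φ' w t) = φ w (π t)) (g g' : N ⋊[φ] W) :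
    (fiberSum π g * fiberSum π g' : MonoidAlgebra R (N' ⋊[φ'] W)) =
      #{t' | π t' = g.left} • fiberSum π (g * g') := by
  conv_lhs => unfold fiberSum
  rw [Finset.sum_mul, ← Finset.sum_const, Finset.sum_filter]
  refine Finset.sum_congr rfl fun t' _ => ?_
  split_ifs with ht'
  · exact single_mul_fiberSum hπ ht' g'
  · exact zero_mul _

end FiberSum

theorem torsionSubgroup_units (M : Type*) [CommMonoid M] (m : ℕ) :
    torsionSubgroup Mˣ m = rootsOfUnity m M :=
  rfl

def torsionSubgroupPiEquiv (ι G : Type*) [CommGroup G] (m : ℕ) :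
    torsionSubgroup (ι → G) m ≃ (ι → torsionSubgroup G m) where
  toFun x i := ⟨x.1 i, congrFun x.2 i⟩
  invFun f := ⟨fun i => f i, funext fun i => (f i).2⟩

theorem natCard_torsionSubgroup_pi_units (ι M : Type*) [Fintype ι] [CommMonoid M] (m : ℕ)
    [NeZero m] [HasEnoughRootsOfUnity M m] :
    Nat.card (torsionSubgroup (ι → Mˣ) m) = m ^ Fintype.card ι := by
  rw [Nat.card_congr (torsionSubgroupPiEquiv ι Mˣ m), Nat.card_pi, torsionSubgroup_units,
    HasEnoughRootsOfUnity.natCard_rootsOfUnity, Finset.prod_const, Finset.card_univ]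

noncomputable instance IsAlgClosed.unitsRootableBy (k : Type*) [Field k] [IsAlgClosed k] :
    RootableBy kˣ ℕ :=
  rootableByOfPowLeftSurj _ _ fun {m} hm x => by
    obtain ⟨z, hz⟩ := IsAlgClosed.exists_pow_nat_eq (x : k) (Nat.pos_of_ne_zero hm)
    have hz0 : z ≠ 0 := by
      rintro rfl
      exact x.ne_zero (by rw [← hz, zero_pow hm])
    exact ⟨Units.mk0 z hz0, Units.ext hz⟩

theorem powHom_surjective {G : Type*} [CommGroup G] [RootableBy G ℕ] {n n' : ℕ}
    (hdvd : n ∣ n') (hn' : n' ≠ 0) : Function.Surjective (powHom (G := G) n n' hdvd) := by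
  intro x
  have hm : n' / n ≠ 0 :=
    (Nat.div_ne_zero_iff_of_dvd hdvd).2 ⟨hn', ne_zero_of_dvd_ne_zero hn' hdvd⟩
  obtain ⟨y, hy : y ^ (n' / n) = x⟩ := RootableBy.surjective_pow G ℕ hm (x : G)
  have hy' : y ^ n' = 1 := by
    rw [← Nat.div_mul_cancel hdvd, pow_mul, hy, x.2]
  exact ⟨⟨y, hy'⟩, Subtype.ext hy⟩

theorem powHom_restrictTorsion {G : Type*} [CommGroup G] {n n' : ℕ} (hdvd : n ∣ n')
    (f : MulAut G) (t : torsionSubgroup G n') :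
    powHom n n' hdvd (MulAut.restrictTorsion n' f t) =
      MulAut.restrictTorsion n f (powHom n n' hdvd t) :=
  Subtype.ext (map_pow f _ _).symm

theorem MonoidHom.card_fiber_mul_natCard_of_surjective {G M : Type*} [Group G] [Fintype G] [Group M]
    [DecidableEq M] (f : G →* M) (hf : Function.Surjective f) (x : M) :
    #{g | f g = x} * Nat.card M = Nat.card G := by
  have : Fintype M := Fintype.ofSurjective f hf
  calc #{g | f g = x} * Nat.card M = ∑ y : M, #{g | f g = y} := by
        rw [Finset.sum_congr rfl fun y _ => MonoidHom.card_fiber_eq_of_mem_range f (hf y) (hf x),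
          Finset.sum_const, Finset.card_univ, Nat.card_eq_fintype_card, smul_eq_mul, mul_comm]
    _ = Nat.card G := by
        rw [Nat.card_eq_fintype_card, ← Finset.card_univ,
          Finset.card_eq_sum_card_fiberwise (f := f) (t := univ) fun _ _ => mem_coe.2 (mem_univ _)]

theorem card_powHom_fiber_mul_pow (k ι : Type*) [Field k] [IsAlgClosed k] [Fintype ι] {n n' : ℕ}
    (hdvd : n ∣ n') [NeZero (n' : k)] [Fintype (torsionSubgroup (ι → kˣ) n')]
    [DecidableEq (torsionSubgroup (ι → kˣ) n)] (x : torsionSubgroup (ι → kˣ) n) :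
    #{t' | powHom n n' hdvd t' = x} * n ^ Fintype.card ι = n' ^ Fintype.card ι := by
  have : NeZero (n : k) :=
    ⟨fun h => NeZero.ne (n' : k) (zero_dvd_iff.1 (h ▸ Nat.cast_dvd_cast hdvd))⟩
  have : NeZero n := NeZero.of_neZero_natCast k
  have : NeZero n' := NeZero.of_neZero_natCast k
  rw [← natCard_torsionSubgroup_pi_units ι k n, ← natCard_torsionSubgroup_pi_units ι k n']
  exact MonoidHom.card_fiber_mul_natCard_of_surjective _ (powHom_surjective hdvd (NeZero.ne n')) x

theorem group_algebra_transition_multiplicative_general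
    (k : Type*) [Field k] [IsAlgClosed k] (p : ℕ) (hp : CharP k p)
    (r n n' : ℕ) (hdvd : n ∣ n') (hpn' : ¬ p ∣ n')
    (W : Type*) [Group W] (φ : W →* MulAut (Fin r → kˣ))
    (L : Type*) [Field L] [CharZero L]
    [Fintype (torsionSubgroup (Fin r → kˣ) n')]
    [DecidableEq (torsionSubgroup (Fin r → kˣ) n)] :
    let Tn := torsionSubgroup (Fin r → kˣ) n
    let Tn' := torsionSubgroup (Fin r → kˣ) n'
    let φn : W →* MulAut Tn := (MulAut.restrictTorsion n).comp φ
    let φn' : W →* MulAut Tn' := (MulAut.restrictTorsion n').comp φ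
    let f : (Tn ⋊[φn] W) → MonoidAlgebra L (Tn' ⋊[φn'] W) := fun g =>
      ((n : L) / (n' : L)) ^ r •
        ∑ t' : Tn', if powHom n n' hdvd t' = g.left then
            MonoidAlgebra.single (⟨t', g.right⟩ : Tn' ⋊[φn'] W) (1 : L)
          else 0
    let h : MonoidAlgebra L (Tn ⋊[φn] W) → MonoidAlgebra L (Tn' ⋊[φn'] W) := fun a =>
      Finsupp.sum a.coeff fun g c => c • f g
    ∀ a b : MonoidAlgebra L (Tn ⋊[φn] W), h (a * b) = h a * h b := by
  intro Tn Tn' φn φn' f h a b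
  have hn' : n' ≠ 0 := by
    rintro rfl
    exact hpn' (dvd_zero p)
  have : NeZero (n' : k) := ⟨fun h0 => hpn' ((CharP.cast_eq_zero_iff k p n').1 h0)⟩
  have hscale (x : Tn) : ((n : L) / n') ^ r * #{t' | powHom n n' hdvd t' = x} = 1 := by
    have hcard : (#{t' | powHom n n' hdvd t' = x} : L) * n ^ r = n' ^ r := by
      exact_mod_cast Fintype.card_fin r ▸ card_powHom_fiber_mul_pow k (Fin r) hdvd x
    rw [div_pow, div_mul_eq_mul_div, div_eq_one_iff_eq (pow_ne_zero _ (Nat.cast_ne_zero.2 hn')),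
      mul_comm, hcard]
  let fMul : (Tn ⋊[φn] W) →ₙ* MonoidAlgebra L (Tn' ⋊[φn'] W) :=
    { toFun := f
      map_mul' g g' := by
        change _ • fiberSum _ _ = _ • fiberSum _ _ * _ • fiberSum _ _
        rw [smul_mul_smul_comm,
          fiberSum_mul_fiberSum fun w => powHom_restrictTorsion hdvd (φ w),
          ← Nat.cast_smul_eq_nsmul L, smul_smul, mul_assoc, hscale, mul_one] }
  -- `h` is `liftMagma L fMul` by definition.
  exact map_mul (MonoidAlgebra.liftMagma L fMul) a b

/-- With `W` acting on the torus `T ≅ (kˣ)^r` (hence on each torsion subgroup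
`T_m`), for `n ∣ n'` prime to the characteristic, the linear map
`h : ℚ̄_ℓ[W⋉T_n] → ℚ̄_ℓ[W⋉T_{n'}]` defined by `h(wt) = (n/n')^r Σ_{t'^{n'/n} = t} wt'`
is compatible with multiplication. -/
theorem group_algebra_transition_multiplicative
    (k : Type*) [Field k] [IsAlgClosed k] (p : ℕ) [Fact p.Prime] (hp : CharP k p)
    (r n n' : ℕ) (hdvd : n ∣ n') (hpn' : ¬ p ∣ n')
    (W : Type*) [Group W] [Finite W] (φ : W →* MulAut (Fin r → kˣ))
    (L : Type*) [Field L] [CharZero L]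
    [Fintype (torsionSubgroup (Fin r → kˣ) n')]
    [DecidableEq (torsionSubgroup (Fin r → kˣ) n)] :
    let Tn := torsionSubgroup (Fin r → kˣ) n
    let Tn' := torsionSubgroup (Fin r → kˣ) n'
    let φn : W →* MulAut Tn := (MulAut.restrictTorsion n).comp φ
    let φn' : W →* MulAut Tn' := (MulAut.restrictTorsion n').comp φ
    let f : (Tn ⋊[φn] W) → MonoidAlgebra L (Tn' ⋊[φn'] W) := fun g =>
      ((n : L) / (n' : L)) ^ r •
        ∑ t' : Tn', if powHom n n' hdvd t' = g.left then
            MonoidAlgebra.single (⟨t', g.right⟩ : Tn' ⋊[φn'] W) (1 : L)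
          else 0
    let h : MonoidAlgebra L (Tn ⋊[φn] W) → MonoidAlgebra L (Tn' ⋊[φn'] W) := fun a =>
      Finsupp.sum a.coeff fun g c => c • f g
    ∀ a b : MonoidAlgebra L (Tn ⋊[φn] W), h (a * b) = h a * h b :=
  group_algebra_transition_multiplicative_general k p hp r n n' hdvd hpn' W φ L
end

section
/- Let G be a connected reductive group over an algebraic closure k of F_p, and let G̃ be a group containing G with G̃/G ≅ ℤ, with G̃_s the preimage of s. Suppose for some γ ∈ G̃_1 the map Ad(γ) : G → G is a Frobenius map for an F_q-rational structure on G. Then for every s > 0 and every γ' ∈ G̃_s, the map Ad(γ') : G → G is a Frobenius map for an F_{q^s}-rational structure on G. -/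
/-!
Write `F = Ad(γ)`. Its power `F^s = Ad(γ^s)` is a Frobenius map for an `F_{q^s}`-structure.
Any `γ'` of degree `s` differs from `γ^s` by an element `a ∈ G`, and Lang's theorem for `F^s`
writes `a = x⁻¹ F^s(x) = x⁻¹ γ^s x γ^{-s}`, so `γ' = x⁻¹ γ^s x`. Hence `Ad(γ')` is `Ad(γ^s)`
conjugated by `x ∈ G`, which is again a Frobenius map for an `F_{q^s}`-structure.
-/

/-- Conjugation by `γ ∈ G̃` on the kernel subgroup `G = ker(deg)` (the "Ad(γ)" map). -/
def adKer {Gt : Type*} [Group Gt] (deg : Gt →* Multiplicative ℤ) (γ : Gt)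
    (g : deg.ker) : deg.ker :=
  ⟨γ * (g : Gt) * γ⁻¹, by
    have hg : deg (g : Gt) = 1 := g.2
    simp [MonoidHom.mem_ker, hg]⟩

section adKer

variable {Gt : Type*} [Group Gt] (deg : Gt →* Multiplicative ℤ)

lemma adKer_iterate (γ : Gt) (s : ℕ) : (adKer deg γ)^[s] = adKer deg (γ ^ s) := by
  induction s with
  | zero => funext g; ext; simp [adKer]
  | succ n ih =>
    funext g
    rw [Function.iterate_succ', Function.comp_apply, ih]
    ext
    simp only [adKer]
    group

lemma adKer_conj (δ : Gt) (x : deg.ker) :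
    (fun g => x⁻¹ * adKer deg δ (x * g * x⁻¹) * x) = adKer deg ((x : Gt)⁻¹ * δ * x) := by
  funext g
  ext
  simp only [adKer, Subgroup.coe_mul, Subgroup.coe_inv]
  group

lemma exists_conj_of_lang {δ γ' : Gt}
    (hlang : ∀ g : deg.ker, ∃ x : deg.ker, g = x⁻¹ * adKer deg δ x) (hdeg : deg γ' = deg δ) :
    ∃ x : deg.ker, γ' = (x : Gt)⁻¹ * δ * x := by
  have ha : γ' * δ⁻¹ ∈ deg.ker := by simp [MonoidHom.mem_ker, hdeg]
  obtain ⟨x, hx⟩ := hlang ⟨γ' * δ⁻¹, ha⟩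
  refine ⟨x, ?_⟩
  have hx' : γ' * δ⁻¹ = (x : Gt)⁻¹ * (δ * x * δ⁻¹) := congrArg Subtype.val hx
  rw [← inv_mul_cancel_right γ' δ, hx']
  group

end adKer

/-- Let `G̃ ⊇ G` with `G̃/G ≅ ℤ` (realized by `deg : G̃ →* ℤ` with
`G = ker(deg)` and `G̃_s = deg⁻¹(s)`).  Suppose `Frob` is a notion of "Frobenius map for an
`F_m`-rational structure" satisfying Lang's theorem, stability under conjugation by
elements of `G`, and closure of powers.  If for some `γ ∈ G̃_1`, `Ad(γ)` is a Frobenius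
map for an `F_q`-structure, then for every `s > 0` and every `γ' ∈ G̃_s`, the map
`Ad(γ')` is a Frobenius map for an `F_{q^s}`-structure. -/
theorem frobenius_on_all_components
    {Gt : Type*} [Group Gt] (deg : Gt →* Multiplicative ℤ)
    (Frob : ℕ → (deg.ker → deg.ker) → Prop)
    (hlang : ∀ (m : ℕ) (F : deg.ker → deg.ker), Frob m F →
        ∀ g : deg.ker, ∃ x : deg.ker, g = x⁻¹ * F x)
    (hconj : ∀ (m : ℕ) (F : deg.ker → deg.ker) (a : deg.ker), Frob m F →
        Frob m (fun g => a⁻¹ * F (a * g * a⁻¹) * a))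
    (hpow : ∀ (m : ℕ) (F : deg.ker → deg.ker) (s : ℕ), 0 < s → Frob m F →
        Frob (m ^ s) (F^[s]))
    (q : ℕ) (γ : Gt) (hγ : deg γ = Multiplicative.ofAdd 1)
    (hFrob : Frob q (adKer deg γ)) :
    ∀ s : ℕ, 0 < s → ∀ γ' : Gt, deg γ' = Multiplicative.ofAdd (s : ℤ) →
      Frob (q ^ s) (adKer deg γ') := by
  intro s hs γ' hγ'
  have hFrob_pow : Frob (q ^ s) (adKer deg (γ ^ s)) :=
    adKer_iterate deg γ s ▸ hpow q _ s hs hFrob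
  have hdeg : deg γ' = deg (γ ^ s) := by
    rw [hγ', map_pow, hγ, ← ofAdd_nsmul, nsmul_one]
  obtain ⟨x, rfl⟩ := exists_conj_of_lang deg (hlang _ _ hFrob_pow) hdeg
  rw [← adKer_conj]
  exact hconj _ _ x hFrob_pow
end
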